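/- arXiv:2010.10493 — 2 statements merged into one kernel-verified Lean document; each statement's English description precedes it below -/
import Mathlib

section
/- Fix a permutation μ of {1,…,n+1} and nonnegative integers p, q. The number of pairs of words (a,b) in the alphabet {1,…,n} with a strictly increasing, b strictly decreasing, |a| = p, |b| = q, and the concatenation ab a Hecke word for μ, equals the number of pairs of words (a,b) with a strictly decreasing, b strictly increasing, |a| = q, |b| = p, and the concatenation ab a Hecke word for μ. -/
variable {α : Type*} [LinearOrder α]

/-- abstract version of the 0-Hecke step -/
def hT (a b : α) (w : Equiv.Perm α) : Equiv.Perm α :=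
  if w.symm a < w.symm b then Equiv.swap a b * w else w

lemma symm_swap_mul (a b : α) (w : Equiv.Perm α) (x : α) :
    (Equiv.swap a b * w).symm x = w.symm (Equiv.swap a b x) := by
  simp [Equiv.Perm.mul_def, Equiv.symm_trans_apply]

lemma hT_idem (a b : α) (w : Equiv.Perm α) : hT a b (hT a b w) = hT a b w := by
  by_cases hab : a = b
  · subst hab; simp [hT]
  unfold hT
  split_ifs with h1 h2
  · exfalso
    rw [symm_swap_mul, symm_swap_mul, Equiv.swap_apply_left, Equiv.swap_apply_right] at h2
    exact absurd h1 (not_lt.2 h2.le)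
  · rfl
  · rfl

lemma hT_comm (a b c d : α) (hac : a ≠ c) (had : a ≠ d) (hbc : b ≠ c) (hbd : b ≠ d)
    (w : Equiv.Perm α) : hT a b (hT c d w) = hT c d (hT a b w) := by
  have hsw : Equiv.swap a b * Equiv.swap c d = Equiv.swap c d * Equiv.swap a b := by
    rw [Equiv.mul_swap_eq_swap_mul,
      Equiv.swap_apply_of_ne_of_ne hac.symm hbc.symm,
      Equiv.swap_apply_of_ne_of_ne had.symm hbd.symm]
  have e1 : ∀ w' : Equiv.Perm α, (Equiv.swap c d * w').symm a = w'.symm a := fun w' => by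
    rw [symm_swap_mul, Equiv.swap_apply_of_ne_of_ne hac had]
  have e2 : ∀ w' : Equiv.Perm α, (Equiv.swap c d * w').symm b = w'.symm b := fun w' => by
    rw [symm_swap_mul, Equiv.swap_apply_of_ne_of_ne hbc hbd]
  have e3 : ∀ w' : Equiv.Perm α, (Equiv.swap a b * w').symm c = w'.symm c := fun w' => by
    rw [symm_swap_mul, Equiv.swap_apply_of_ne_of_ne hac.symm hbc.symm]
  have e4 : ∀ w' : Equiv.Perm α, (Equiv.swap a b * w').symm d = w'.symm d := fun w' => by
    rw [symm_swap_mul, Equiv.swap_apply_of_ne_of_ne had.symm hbd.symm]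
  unfold hT
  by_cases h1 : w.symm a < w.symm b <;> by_cases h2 : w.symm c < w.symm d <;>
    simp only [h1, h2, e1, e2, e3, e4, if_pos, if_neg, if_true, if_false] <;>
    simp only [← mul_assoc, hsw]

lemma hT_braid (a b c : α) (hab : a ≠ b) (hac : a ≠ c) (hbc : b ≠ c) (w : Equiv.Perm α) :
    hT a b (hT b c (hT a b w)) = hT b c (hT a b (hT b c w)) := by
  have sab_a : Equiv.swap a b a = b := Equiv.swap_apply_left a b
  have sab_b : Equiv.swap a b b = a := Equiv.swap_apply_right a b
  have sab_c : Equiv.swap a b c = c := Equiv.swap_apply_of_ne_of_ne hac.symm hbc.symm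
  have sbc_a : Equiv.swap b c a = a := Equiv.swap_apply_of_ne_of_ne hab hac
  have sbc_b : Equiv.swap b c b = c := Equiv.swap_apply_left b c
  have sbc_c : Equiv.swap b c c = b := Equiv.swap_apply_right b c
  have hbraid : Equiv.swap a b * Equiv.swap b c * Equiv.swap a b
      = Equiv.swap b c * Equiv.swap a b * Equiv.swap b c := by
    have e1 := Equiv.swap_mul_swap_mul_swap hbc.symm hac.symm
    have e2 := Equiv.swap_mul_swap_mul_swap hab hac
    rw [Equiv.swap_comm b a, Equiv.swap_comm c b] at e1
    rw [e1, e2, Equiv.swap_comm]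
  have hu := (Equiv.injective w.symm).ne hab
  have hv := (Equiv.injective w.symm).ne hbc
  have ht := (Equiv.injective w.symm).ne hac
  rcases lt_trichotomy (w.symm a) (w.symm b) with h1 | h1 | h1 <;>
  rcases lt_trichotomy (w.symm b) (w.symm c) with h2 | h2 | h2 <;>
  rcases lt_trichotomy (w.symm a) (w.symm c) with h3 | h3 | h3 <;>
  first
  | exact absurd h1 hu
  | exact absurd h2 hv
  | exact absurd h3 ht
  | exact absurd (h1.trans h2) (lt_asymm h3)
  | exact absurd (h2.trans h1) (lt_asymm h3)
  | (simp only [hT, symm_swap_mul, sab_a, sab_b, sab_c, sbc_a, sbc_b, sbc_c, h1, h2, h3,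
      not_lt.2 h1.le, not_lt.2 h2.le, not_lt.2 h3.le, if_true, if_false, ite_true, ite_false] <;>
     first
     | rfl
     | simp only [← mul_assoc, hbraid])


section KeyLocal
variable {R : Type*} [CommRing R] {S : Type*} [Ring S] [Algebra R S]

lemma comm2 (x y : R) (a : S) : (1 + x • a) * (1 + y • a) = (1 + y • a) * (1 + x • a) := by
  simp only [mul_add, add_mul, mul_one, one_mul, smul_mul_assoc, mul_smul_comm, smul_smul]
  module

lemma key_local (x y : R) (a b : S) (ha : a * a = a) (hb : b * b = b)
    (hbr : a * (b * a) = b * (a * b)) :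
    (1 + x • a) * ((1 + x • b) * ((1 + y • b) * (1 + y • a)))
      = (1 + y • b) * ((1 + x • a) * ((1 + y • a) * (1 + x • b))) := by
  have h3 : a * (a * b) = a * b := by rw [← mul_assoc, ha]
  have h4 : b * (b * a) = b * a := by rw [← mul_assoc, hb]
  have h5 : b * (a * b) = a * (b * a) := hbr.symm
  simp only [mul_add, add_mul, mul_one, one_mul, smul_mul_assoc, mul_smul_comm, smul_smul,
    mul_assoc, ha, hb, h3, h4, h5]
  module

end KeyLocal

section CommMain
variable {R : Type*} [CommRing R] {S : Type*} [Ring S] [Algebra R S]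

/-- increasing product -/
noncomputable def Ap (g : ℕ → S) (x : R) (k : ℕ) : S :=
  ((List.range k).map (fun i => 1 + x • g i)).prod

/-- decreasing product -/
noncomputable def Bp (g : ℕ → S) (y : R) (k : ℕ) : S :=
  ((List.range k).reverse.map (fun i => 1 + y • g i)).prod

lemma Ap_succ (g : ℕ → S) (x : R) (k : ℕ) : Ap g x (k+1) = Ap g x k * (1 + x • g k) := by
  simp [Ap, List.range_succ]

lemma Bp_succ (g : ℕ → S) (y : R) (k : ℕ) : Bp g y (k+1) = (1 + y • g k) * Bp g y k := by
  simp [Bp, List.range_succ]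

lemma commute_Ap (g : ℕ → S) (c : S) (k : ℕ) (hc : ∀ i, i < k → Commute c (g i)) (x : R) :
    Commute c (Ap g x k) := by
  apply Commute.list_prod_right
  intro z hz
  simp only [List.mem_map, List.mem_range] at hz
  obtain ⟨i, hi, rfl⟩ := hz
  exact (Commute.one_right c).add_right ((hc i hi).smul_right x)

lemma commute_Bp (g : ℕ → S) (c : S) (k : ℕ) (hc : ∀ i, i < k → Commute c (g i)) (y : R) :
    Commute c (Bp g y k) := by
  apply Commute.list_prod_right
  intro z hz
  simp only [List.mem_map, List.mem_reverse, List.mem_range] at hz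
  obtain ⟨i, hi, rfl⟩ := hz
  exact (Commute.one_right c).add_right ((hc i hi).smul_right y)

lemma comm_main (g : ℕ → S) (hsq : ∀ i, g i * g i = g i)
    (hbr : ∀ i, g i * (g (i+1) * g i) = g (i+1) * (g i * g (i+1)))
    (hcm : ∀ i j, i + 2 ≤ j → Commute (g i) (g j))
    (x y : R) : ∀ k, Ap g x k * Bp g y k = Bp g y k * Ap g x k := by
  intro k
  induction k with
  | zero => simp [Ap, Bp]
  | succ k IH =>
    rcases k with _ | j
    · simp only [Ap_succ, Bp_succ]
      simp only [Ap, Bp, List.range_zero, List.map_nil, List.prod_nil, List.reverse_nil,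
        one_mul, mul_one]
      exact comm2 x y (g 0)
    · set P := Ap g x j with hP
      set Q := Bp g y j with hQ
      set f1 : S := 1 + x • g j with hf1
      set f2 : S := 1 + x • g (j+1) with hf2
      set e1 : S := 1 + y • g j with he1
      set e2 : S := 1 + y • g (j+1) with he2
      have IH' : (P * f1) * (e1 * Q) = (e1 * Q) * (P * f1) := by
        simpa only [Ap_succ, Bp_succ] using IH
      have ce2P : Commute e2 P := by
        apply commute_Ap
        intro i hi
        exact (Commute.one_left _).add_left (((hcm i (j+1) (by omega)).symm).smul_left y)
      have cf2Q : Commute f2 Q := by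
        apply commute_Bp
        intro i hi
        exact (Commute.one_left _).add_left (((hcm i (j+1) (by omega)).symm).smul_left x)
      have key := key_local x y (g j) (g (j+1)) (hsq j) (hsq (j+1)) (hbr j)
      rw [← hf1, ← hf2, ← he1, ← he2] at key
      have goal' : ((P * f1) * f2) * (e2 * (e1 * Q)) = (e2 * (e1 * Q)) * ((P * f1) * f2) := by
        calc ((P * f1) * f2) * (e2 * (e1 * Q))
            = P * ((f1 * (f2 * (e2 * e1))) * Q) := by simp only [mul_assoc]
          _ = P * ((e2 * (f1 * (e1 * f2))) * Q) := by rw [key]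
          _ = P * (e2 * (f1 * (e1 * (f2 * Q)))) := by simp only [mul_assoc]
          _ = e2 * (P * (f1 * (e1 * (f2 * Q)))) := by rw [← ce2P.left_comm]
          _ = e2 * (P * (f1 * (e1 * (Q * f2)))) := by rw [cf2Q.eq]
          _ = e2 * (((P * f1) * (e1 * Q)) * f2) := by simp only [mul_assoc]
          _ = e2 * (((e1 * Q) * (P * f1)) * f2) := by rw [IH']
          _ = (e2 * (e1 * Q)) * ((P * f1) * f2) := by simp only [mul_assoc]
      simpa only [Ap_succ, Bp_succ, mul_assoc] using goal'

end CommMain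


/-- The 0-Hecke operator `s̄_i`: interchange the values `i` and `i+1` in one-line
notation if `i` lies to the left of `i+1`, and do nothing otherwise. -/
def heckeStep {n : ℕ} (i : Fin n) (w : Equiv.Perm (Fin (n + 1))) : Equiv.Perm (Fin (n + 1)) :=
  if w.symm i.castSucc < w.symm i.succ then Equiv.swap i.castSucc i.succ * w else w

/-- `l` is a Hecke word for `μ`: applying the operators `s̄` right-to-left to the
identity arrangement yields `μ`. -/
def isHeckeWord {n : ℕ} (μ : Equiv.Perm (Fin (n + 1))) (l : List (Fin n)) : Prop :=
  l.foldr heckeStep 1 = μ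


namespace Stmt9

variable {n : ℕ}

lemma heckeStep_eq (i : Fin n) : heckeStep i = hT i.castSucc i.succ := by
  funext w
  unfold heckeStep hT
  split_ifs <;> first | rfl | congr!

/-- `heckeStep` as an element of the endomorphism monoid -/
def hkE (i : Fin n) : Function.End (Equiv.Perm (Fin (n + 1))) := heckeStep i

/-- the endomorphism of `Perm (Fin (n+1))` given by a word -/
def eWord (l : List (Fin n)) : Function.End (Equiv.Perm (Fin (n + 1))) :=
  fun w => l.foldr heckeStep w

lemma eWord_nil : eWord ([] : List (Fin n)) = 1 := rfl

lemma eWord_cons (i : Fin n) (l : List (Fin n)) :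
    eWord (i :: l) = hkE i * eWord l := rfl

lemma eWord_append (t s : List (Fin n)) : eWord (t ++ s) = eWord t * eWord s := by
  funext w
  exact List.foldr_append

abbrev RR := MvPolynomial Bool ℤ

abbrev SA (n : ℕ) := MonoidAlgebra RR (Function.End (Equiv.Perm (Fin (n + 1))))

noncomputable def U (i : Fin n) : SA n := MonoidAlgebra.single (hkE i) 1

noncomputable def gS (k : ℕ) : SA n := if h : k < n then U ⟨k, h⟩ else 0

lemma end_idem (i : Fin n) : hkE i * hkE i = hkE i := by
  rw [Function.End.mul_def]
  funext w
  simp only [Function.comp_apply, hkE]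
  rw [heckeStep_eq]
  exact hT_idem _ _ w

lemma gS_sq (k : ℕ) : (gS k : SA n) * gS k = gS k := by
  unfold gS
  split_ifs with h
  · rw [U, MonoidAlgebra.single_mul_single, one_mul, end_idem]
  · simp

lemma gS_braid (k : ℕ) :
    (gS k : SA n) * (gS (k+1) * gS k) = gS (k+1) * (gS k * gS (k+1)) := by
  unfold gS
  by_cases h1 : k + 1 < n
  · have h0 : k < n := by omega
    rw [dif_pos h0, dif_pos h1]
    unfold U
    simp only [MonoidAlgebra.single_mul_single, one_mul]
    congr 1
    simp only [Function.End.mul_def]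
    funext w
    simp only [Function.comp_apply, hkE]
    rw [heckeStep_eq, heckeStep_eq]
    have e1 : (⟨k, h0⟩ : Fin n).succ = (⟨k+1, h1⟩ : Fin n).castSucc := rfl
    rw [e1]
    apply hT_braid <;>
      exact Fin.ne_of_val_ne (by simp only [Fin.coe_castSucc, Fin.val_succ] <;> omega)
  · rw [dif_neg h1]
    simp

lemma gS_comm (i j : ℕ) (hij : i + 2 ≤ j) : Commute (gS i : SA n) (gS j) := by
  unfold gS
  by_cases hj : j < n
  · have hi : i < n := by omega
    rw [dif_pos hi, dif_pos hj]
    unfold U Commute SemiconjBy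
    simp only [MonoidAlgebra.single_mul_single, one_mul]
    congr 1
    simp only [Function.End.mul_def]
    funext w
    simp only [Function.comp_apply, hkE]
    rw [heckeStep_eq, heckeStep_eq]
    apply hT_comm <;>
      exact Fin.ne_of_val_ne (by simp only [Fin.coe_castSucc, Fin.val_succ] <;> omega)
  · rw [dif_neg hj]
    simp [Commute, SemiconjBy]


/-- product of `1 + x • U i` over a word -/
noncomputable def PP (x : RR) (l : List (Fin n)) : SA n :=
  (l.map (fun i => 1 + x • U i)).prod

lemma PP_expand (x : RR) : ∀ l : List (Fin n),
    PP x l = (l.sublists'.map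
      (fun t => (x ^ t.length) • (MonoidAlgebra.single (eWord t) (1:RR) : SA n))).sum
  | [] => by
    simp only [PP, List.map_nil, List.prod_nil, List.sublists'_nil, List.map_cons,
      List.length_nil, pow_zero, one_smul, List.sum_cons, List.sum_nil, add_zero, eWord_nil]
    rw [MonoidAlgebra.one_def]
  | (i :: l) => by
    have IH := PP_expand x l
    have h1 : PP x (i :: l) = PP x l + x • (U i * PP x l) := by
      simp only [PP, List.map_cons, List.prod_cons, add_mul, one_mul, smul_mul_assoc]
    rw [h1, IH, List.sublists'_cons, List.map_append, List.sum_append]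
    congr 1
    have hmul : ∀ (L : List (SA n)) (c : SA n), c * L.sum = (L.map (c * ·)).sum := fun L c => by
      simpa using map_list_sum (AddMonoidHom.mulLeft c) L
    rw [hmul, List.smul_sum, List.map_map, List.map_map, List.map_map]
    refine congrArg List.sum (List.map_congr_left fun t _ => ?_)
    simp only [Function.comp_apply, AddMonoidHom.coe_mulLeft, List.length_cons]
    rw [mul_smul_comm, smul_smul, U, MonoidAlgebra.single_mul_single, one_mul, ← eWord_cons,
      ← pow_succ']

noncomputable def Phi (μ : Equiv.Perm (Fin (n + 1))) : SA n →+ RR :=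
  (Finsupp.liftAddHom (fun (m : Function.End (Equiv.Perm (Fin (n + 1)))) => if m 1 = μ then AddMonoidHom.id RR else 0)).comp
    MonoidAlgebra.coeffAddEquiv.toAddMonoidHom

lemma Phi_single (μ : Equiv.Perm (Fin (n + 1))) (m : Function.End (Equiv.Perm (Fin (n + 1))))
    (c : RR) : Phi μ (MonoidAlgebra.single m c) = if m 1 = μ then c else 0 := by
  unfold Phi
  erw [Finsupp.liftAddHom_apply_single]
  split_ifs <;> rfl

/-- the main summation identity -/
lemma main_sum (μ : Equiv.Perm (Fin (n + 1))) (m0 : Bool →₀ ℕ) (x y : RR)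
    (l1 l2 : List (Fin n)) :
    MvPolynomial.coeff m0 (Phi μ (PP x l1 * PP y l2))
      = (l1.sublists'.map (fun t => (l2.sublists'.map (fun s =>
          if eWord (t ++ s) 1 = μ then MvPolynomial.coeff m0 (x ^ t.length * y ^ s.length)
          else 0)).sum)).sum := by
  have hmul : ∀ (L : List (SA n)) (c : SA n), c * L.sum = (L.map (c * ·)).sum := fun L c => by
    simpa using map_list_sum (AddMonoidHom.mulLeft c) L
  have hmulr : ∀ (L : List (SA n)) (c : SA n), L.sum * c = (L.map (· * c)).sum := fun L c => by
    simpa using map_list_sum (AddMonoidHom.mulRight c) L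
  show MvPolynomial.coeffAddMonoidHom m0 (Phi μ _) = _
  rw [PP_expand x l1, PP_expand y l2, hmulr, map_list_sum (Phi μ),
    map_list_sum (MvPolynomial.coeffAddMonoidHom m0)]
  simp only [List.map_map]
  refine congrArg List.sum (List.map_congr_left fun t _ => ?_)
  simp only [Function.comp_apply]
  rw [hmul, map_list_sum (Phi μ), map_list_sum (MvPolynomial.coeffAddMonoidHom m0)]
  simp only [List.map_map]
  refine congrArg List.sum (List.map_congr_left fun s _ => ?_)
  simp only [Function.comp_apply]
  rw [smul_mul_assoc, mul_smul_comm, smul_smul, MonoidAlgebra.single_mul_single, one_mul,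
    ← eWord_append, MonoidAlgebra.smul_single', mul_one]
  show MvPolynomial.coeff m0 (Phi μ _) = _
  rw [Phi_single, apply_ite (MvPolynomial.coeff m0), MvPolynomial.coeff_zero]


lemma eWord_one (l : List (Fin n)) : eWord l 1 = l.foldr heckeStep 1 := rfl

lemma coeff_XX (p q a b : ℕ) :
    MvPolynomial.coeff (Finsupp.single false p + Finsupp.single true q)
      ((MvPolynomial.X false : RR) ^ a * MvPolynomial.X true ^ b)
    = if a = p ∧ b = q then (1 : ℤ) else 0 := by
  rw [MvPolynomial.X_pow_eq_monomial, MvPolynomial.X_pow_eq_monomial, MvPolynomial.monomial_mul,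
    one_mul, MvPolynomial.coeff_monomial]
  refine if_congr ?_ rfl rfl
  constructor
  · intro h
    constructor
    · simpa [Finsupp.single_apply] using DFunLike.congr_fun h false
    · simpa [Finsupp.single_apply] using DFunLike.congr_fun h true
  · rintro ⟨rfl, rfl⟩; rfl

lemma coeff_XX' (p q a b : ℕ) :
    MvPolynomial.coeff (Finsupp.single false p + Finsupp.single true q)
      ((MvPolynomial.X true : RR) ^ b * MvPolynomial.X false ^ a)
    = if a = p ∧ b = q then (1 : ℤ) else 0 := by
  rw [mul_comm, coeff_XX]

lemma pairwise_lt_iff (l : List (Fin n)) :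
    l.Pairwise (· < ·) ↔ l.Sublist (List.finRange n) := by
  constructor
  · intro h
    haveI : Std.Antisymm (α := Fin n) (· < ·) := ⟨fun a b h1 h2 => absurd h2 (lt_asymm h1)⟩
    refine List.sublist_of_subperm_of_pairwise
      (List.subperm_of_subset (h.imp ne_of_lt) fun x _ => List.mem_finRange x) h
      (List.pairwise_lt_finRange n)
  · intro h
    exact (List.pairwise_lt_finRange n).sublist h

lemma pairwise_gt_iff (l : List (Fin n)) :
    l.Pairwise (fun a b => b < a) ↔ l.Sublist (List.finRange n).reverse := by
  have h1 : l.Pairwise (fun a b => b < a) ↔ l.reverse.Pairwise (· < ·) := by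
    rw [List.pairwise_reverse]
  rw [h1, pairwise_lt_iff]
  constructor
  · intro h
    have := List.reverse_sublist.2 h
    simpa using this
  · intro h
    have := List.reverse_sublist.2 h
    simpa using this

lemma Ap_eq (x : RR) : Ap (gS (n := n)) x n = PP x (List.finRange n) := by
  unfold Ap PP
  rw [← (show (List.finRange n).map (fun i : Fin n => (i : ℕ)) = List.range n from
    List.ext_getElem (by simp) (fun i _ _ => by simp)), List.map_map]
  refine congrArg List.prod (List.map_congr_left fun i _ => ?_)
  simp [gS, i.isLt, U]

lemma Bp_eq (y : RR) : Bp (gS (n := n)) y n = PP y (List.finRange n).reverse := by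
  unfold Bp PP
  rw [← (show (List.finRange n).map (fun i : Fin n => (i : ℕ)) = List.range n from
    List.ext_getElem (by simp) (fun i _ _ => by simp)), ← List.map_reverse, List.map_map]
  refine congrArg List.prod (List.map_congr_left fun i _ => ?_)
  simp [gS, i.isLt, U]

lemma comm_final (x y : RR) :
    PP x (List.finRange n) * PP y (List.finRange n).reverse
      = PP y (List.finRange n).reverse * PP x (List.finRange n) := by
  rw [← Ap_eq, ← Bp_eq]
  exact comm_main gS gS_sq gS_braid gS_comm x y n

end Stmt9

/-- the number of pairs of words `(a,b)` with `a` strictly increasing of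
length `p`, `b` strictly decreasing of length `q` and `ab` a Hecke word for `μ`, equals
the number of pairs `(a,b)` with `a` strictly decreasing of length `q`, `b` strictly
increasing of length `p` and `ab` a Hecke word for `μ`. -/
theorem stmt_9 {n : ℕ} (μ : Equiv.Perm (Fin (n + 1))) (p q : ℕ) :
    Set.ncard {ab : List (Fin n) × List (Fin n) |
        ab.1.Pairwise (fun x y => x < y) ∧ ab.2.Pairwise (fun x y => y < x) ∧
        ab.1.length = p ∧ ab.2.length = q ∧ isHeckeWord μ (ab.1 ++ ab.2)} =
    Set.ncard {ab : List (Fin n) × List (Fin n) |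
        ab.1.Pairwise (fun x y => y < x) ∧ ab.2.Pairwise (fun x y => x < y) ∧
        ab.1.length = q ∧ ab.2.length = p ∧ isHeckeWord μ (ab.1 ++ ab.2)} := by
  classical
  open Stmt9 in
  set x : RR := MvPolynomial.X false with hx
  set y : RR := MvPolynomial.X true with hy
  set m0 : Bool →₀ ℕ := Finsupp.single false p + Finsupp.single true q with hm0
  have hnd1 : (List.finRange n).sublists'.Nodup :=
    List.nodup_sublists'.2 (List.nodup_finRange n)
  have hnd2 : (List.finRange n).reverse.sublists'.Nodup :=
    List.nodup_sublists'.2 (List.nodup_reverse.2 (List.nodup_finRange n))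
  set F1 : Finset (List (Fin n) × List (Fin n)) :=
    ((List.finRange n).sublists'.toFinset ×ˢ (List.finRange n).reverse.sublists'.toFinset).filter
      (fun ab => ab.1.length = p ∧ ab.2.length = q ∧ isHeckeWord μ (ab.1 ++ ab.2)) with hF1
  set F2 : Finset (List (Fin n) × List (Fin n)) :=
    ((List.finRange n).reverse.sublists'.toFinset ×ˢ (List.finRange n).sublists'.toFinset).filter
      (fun ab => ab.1.length = q ∧ ab.2.length = p ∧ isHeckeWord μ (ab.1 ++ ab.2)) with hF2
  have hS1 : {ab : List (Fin n) × List (Fin n) |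
      ab.1.Pairwise (fun x y => x < y) ∧ ab.2.Pairwise (fun x y => y < x) ∧
      ab.1.length = p ∧ ab.2.length = q ∧ isHeckeWord μ (ab.1 ++ ab.2)} = ↑F1 := by
    ext ab
    simp only [Set.mem_setOf_eq, hF1, Finset.coe_filter, Finset.mem_product,
      List.mem_toFinset, List.mem_sublists', Set.mem_setOf_eq, Stmt9.pairwise_lt_iff,
      Stmt9.pairwise_gt_iff]
    tauto
  have hS2 : {ab : List (Fin n) × List (Fin n) |
      ab.1.Pairwise (fun x y => y < x) ∧ ab.2.Pairwise (fun x y => x < y) ∧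
      ab.1.length = q ∧ ab.2.length = p ∧ isHeckeWord μ (ab.1 ++ ab.2)} = ↑F2 := by
    ext ab
    simp only [Set.mem_setOf_eq, hF2, Finset.coe_filter, Finset.mem_product,
      List.mem_toFinset, List.mem_sublists', Set.mem_setOf_eq, Stmt9.pairwise_lt_iff,
      Stmt9.pairwise_gt_iff]
    tauto
  rw [hS1, hS2, Set.ncard_coe_finset, Set.ncard_coe_finset]
  have key1 : (F1.card : ℤ)
      = MvPolynomial.coeff m0 (Stmt9.Phi μ
          (Stmt9.PP x (List.finRange n) * Stmt9.PP y (List.finRange n).reverse)) := by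
    rw [Stmt9.main_sum μ m0 x y (List.finRange n) (List.finRange n).reverse]
    have hterm : ∀ t s : List (Fin n),
        (if Stmt9.eWord (t ++ s) 1 = μ then
            MvPolynomial.coeff m0 (x ^ t.length * y ^ s.length) else 0)
          = if t.length = p ∧ s.length = q ∧ isHeckeWord μ (t ++ s) then (1 : ℤ) else 0 := by
      intro t s
      rw [hx, hy, hm0, Stmt9.coeff_XX]
      have hiff : isHeckeWord μ (t ++ s) ↔ Stmt9.eWord (t ++ s) 1 = μ := Iff.rfl
      split_ifs <;> tauto
    simp only [hterm]
    simp only [← List.sum_toFinset _ hnd2, ← List.sum_toFinset _ hnd1]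
    rw [← Finset.sum_product', Finset.sum_boole]
  have key2 : (F2.card : ℤ)
      = MvPolynomial.coeff m0 (Stmt9.Phi μ
          (Stmt9.PP y (List.finRange n).reverse * Stmt9.PP x (List.finRange n))) := by
    rw [Stmt9.main_sum μ m0 y x (List.finRange n).reverse (List.finRange n)]
    have hterm : ∀ t s : List (Fin n),
        (if Stmt9.eWord (t ++ s) 1 = μ then
            MvPolynomial.coeff m0 (y ^ t.length * x ^ s.length) else 0)
          = if t.length = q ∧ s.length = p ∧ isHeckeWord μ (t ++ s) then (1 : ℤ) else 0 := by
      intro t s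
      rw [hx, hy, hm0, Stmt9.coeff_XX']
      have hiff : isHeckeWord μ (t ++ s) ↔ Stmt9.eWord (t ++ s) 1 = μ := Iff.rfl
      split_ifs <;> tauto
    simp only [hterm]
    simp only [← List.sum_toFinset _ hnd1, ← List.sum_toFinset _ hnd2]
    rw [← Finset.sum_product', Finset.sum_boole]
  have hcomm := Stmt9.comm_final (n := n) x y
  have : (F1.card : ℤ) = (F2.card : ℤ) := by rw [key1, key2, hcomm]
  exact_mod_cast this
end

section
/- Let H be a filling of the Young diagram of a partition with entries in {1,…,n} that strictly increases along each row (left to right) and down each column. Then the column reading word of H (columns read bottom to top, taking the columns from left to right) and the row reading word of H (rows read left to right, taking the rows from bottom to top) are Hecke words for the same permutation of {1,…,n+1}. -/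
open List

namespace Stmt11

open List

variable {α : Type*}

/-! ### Recursion equation for `List.transpose` -/

/-- One step of `List.transpose`: insert a new row into the columns. -/
def ins : List α → List (List α) → List (List α)
  | [], C => C
  | a :: l, [] => [a] :: ins l []
  | a :: l, c :: C => (a :: c) :: ins l C

/-- Insert, dropping overflow. -/
def insS : List α → List (List α) → List (List α)
  | _, [] => []
  | [], C => C
  | a :: s, c :: C => (a :: c) :: insS s C

lemma insS_nil_left : ∀ C : List (List α), insS [] C = C
  | [] => rfl
  | _ :: _ => rfl

lemma ins_eq_insS : ∀ (l : List α) (C : List (List α)),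
    ins l C = insS l C ++ (l.drop C.length).map (fun a => [a])
  | [], C => by simp [ins, insS_nil_left]
  | a :: l, [] => by simp [ins, insS, ins_eq_insS l []]
  | a :: l, c :: C => by simp [ins, insS, ins_eq_insS l C]

lemma mapM_pop_spec : ∀ (C : List (List α)) (s : List α),
    (List.mapM (m := StateM (List α)) List.transpose.pop C).run s = (insS s C, s.drop C.length)
  | [], s => by simp only [List.mapM_nil, insS]; rfl
  | c :: C, [] => by
    simp only [List.mapM_cons, StateT.run_bind]
    have h1 : StateT.run (m := Id) (σ := List α) (List.transpose.pop c) [] = (c, []) := rfl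
    have h2 : StateT.run (m := Id) (σ := List α) (List.mapM List.transpose.pop C) [] =
        (insS [] C, [].drop C.length) := mapM_pop_spec C []
    show (fun a => (c :: a.1, a.2)) <$> StateT.run (m := Id) (List.mapM List.transpose.pop C) [] = _
    rw [h2]
    simp [insS_nil_left, insS]
    rfl
  | c :: C, a :: s => by
    simp only [List.mapM_cons, StateT.run_bind]
    have h1 : StateT.run (m := Id) (σ := List α) (List.transpose.pop c) (a :: s) = (a :: c, s) := rfl
    have h2 : StateT.run (m := Id) (σ := List α) (List.mapM List.transpose.pop C) s =
        (insS s C, s.drop C.length) := mapM_pop_spec C s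
    show (fun x => ((a :: c) :: x.1, x.2)) <$> StateT.run (m := Id) (List.mapM List.transpose.pop C) s = _
    rw [h2]
    simp [insS]
    rfl

lemma foldl_push_toList (l : List α) (arr : Array (List α)) :
    (l.foldl (fun a x => a.push [x]) arr).toList = arr.toList ++ l.map (fun a => [a]) := by
  induction l generalizing arr with
  | nil => simp
  | cons a l ih => simp [ih]

lemma go_toList (l : List α) (acc : Array (List α)) :
    (List.transpose.go l acc).toList = ins l acc.toList := by
  rw [List.transpose.go]
  rw [Array.mapM_eq_mapM_toList]
  have h3 : (List.toArray <$> List.mapM (m := StateM (List α)) List.transpose.pop acc.toList) l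
      = ((insS l acc.toList).toArray, l.drop acc.toList.length) := by
    show StateT.run (List.toArray <$> List.mapM (m := StateM (List α)) List.transpose.pop acc.toList) l = _
    rw [StateT.run_map, mapM_pop_spec]
    rfl
  rw [h3]
  simp only [foldl_push_toList, List.toList_toArray, ins_eq_insS]

lemma transpose_cons_eq (l : List α) (L : List (List α)) :
    (l :: L).transpose = ins l L.transpose := by
  show (List.foldr List.transpose.go #[] (l :: L)).toList = _
  rw [List.foldr_cons, go_toList]
  rfl

lemma transpose_all_nil : ∀ {E : List (List α)}, (∀ r ∈ E, r = []) → E.transpose = []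
  | [], _ => rfl
  | e :: E, h => by
    rw [transpose_cons_eq, h e (mem_cons_self), transpose_all_nil (fun r hr => h r (mem_cons_of_mem _ hr))]
    rfl

lemma transpose_append_empty {E : List (List α)} (hE : ∀ r ∈ E, r = []) :
    ∀ A : List (List α), (A ++ E).transpose = A.transpose
  | [] => by rw [nil_append]; exact transpose_all_nil hE
  | a :: A => by
    rw [cons_append, transpose_cons_eq, transpose_append_empty hE A, transpose_cons_eq]

lemma transpose_heads_tails : ∀ {A : List (List α)}, A ≠ [] → (∀ r ∈ A, r ≠ []) →
    A.transpose = (A.map (fun r => r.take 1)).flatten :: (A.map (fun r => r.drop 1)).transpose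
  | [], h, _ => absurd rfl h
  | r :: A, _, hne => by
    obtain ⟨a, r', rfl⟩ : ∃ a r', r = a :: r' := by
      cases r with
      | nil => exact absurd rfl (hne _ (mem_cons_self))
      | cons a r' => exact ⟨a, r', rfl⟩
    rcases eq_or_ne A [] with rfl | hA
    · rw [transpose_cons_eq]
      simp only [map_cons, map_nil, flatten_cons, flatten_nil, append_nil, take_cons,
        take_zero, drop_succ_cons, drop_zero]
      show ins (a :: r') [].transpose = [a] :: (r' :: ([] : List (List α))).transpose
      rw [transpose_cons_eq]
      rfl
    · have ih := transpose_heads_tails hA (fun x hx => hne x (mem_cons_of_mem _ hx))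
      rw [transpose_cons_eq, ih, map_cons, map_cons, transpose_cons_eq]
      simp only [take_cons, take_zero, drop_succ_cons, drop_zero, flatten_cons]
      rfl

/-! ### Commutation of Hecke steps -/

def Comm {n : ℕ} (a b : Fin n) : Prop := (a : ℕ) + 2 ≤ b ∨ (b : ℕ) + 2 ≤ a

lemma comm_step_aux {n : ℕ} {a b : Fin n} (h : (a : ℕ) + 2 ≤ b) (w : Equiv.Perm (Fin (n + 1))) :
    heckeStep a (heckeStep b w) = heckeStep b (heckeStep a w) := by
  set sa := Equiv.swap a.castSucc a.succ with hsa
  set sb := Equiv.swap b.castSucc b.succ with hsb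
  have hb := b.isLt
  have h1 : (a.castSucc : Fin (n+1)).val = a := Fin.coe_castSucc a
  have h2 : (a.succ : Fin (n+1)).val = a + 1 := Fin.val_succ a
  have h3 : (b.castSucc : Fin (n+1)).val = b := Fin.coe_castSucc b
  have h4 : (b.succ : Fin (n+1)).val = b + 1 := Fin.val_succ b
  have fixb1 : sb a.castSucc = a.castSucc :=
    Equiv.swap_apply_of_ne_of_ne (Fin.ne_of_val_ne (by omega)) (Fin.ne_of_val_ne (by omega))
  have fixb2 : sb a.succ = a.succ :=
    Equiv.swap_apply_of_ne_of_ne (Fin.ne_of_val_ne (by omega)) (Fin.ne_of_val_ne (by omega))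
  have fixa1 : sa b.castSucc = b.castSucc :=
    Equiv.swap_apply_of_ne_of_ne (Fin.ne_of_val_ne (by omega)) (Fin.ne_of_val_ne (by omega))
  have fixa2 : sa b.succ = b.succ :=
    Equiv.swap_apply_of_ne_of_ne (Fin.ne_of_val_ne (by omega)) (Fin.ne_of_val_ne (by omega))
  have symm_mul : ∀ (s v : Equiv.Perm (Fin (n+1))) (x : Fin (n+1)), s.symm = s →
      (s * v).symm x = v.symm (s x) := by
    intro s v x hs
    rw [Equiv.Perm.mul_def, Equiv.symm_trans_apply, hs]
  have sbsymm : sb.symm = sb := Equiv.symm_swap _ _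
  have sasymm : sa.symm = sa := Equiv.symm_swap _ _
  have hdisj : Equiv.Perm.Disjoint sa sb := by
    intro x
    by_cases hx1 : x = a.castSucc
    · right; rw [hx1]; exact fixb1
    · by_cases hx2 : x = a.succ
      · right; rw [hx2]; exact fixb2
      · left; exact Equiv.swap_apply_of_ne_of_ne hx1 hx2
  have hcomm : sa * sb = sb * sa := hdisj.commute.eq
  have condb : ∀ v : Equiv.Perm (Fin (n+1)),
      ((sa * v).symm b.castSucc < (sa * v).symm b.succ) ↔ (v.symm b.castSucc < v.symm b.succ) := by
    intro v; rw [symm_mul sa v _ sasymm, symm_mul sa v _ sasymm, fixa1, fixa2]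
  have conda : ∀ v : Equiv.Perm (Fin (n+1)),
      ((sb * v).symm a.castSucc < (sb * v).symm a.succ) ↔ (v.symm a.castSucc < v.symm a.succ) := by
    intro v; rw [symm_mul sb v _ sbsymm, symm_mul sb v _ sbsymm, fixb1, fixb2]
  have stepaT : ∀ v : Equiv.Perm (Fin (n+1)), (v.symm a.castSucc < v.symm a.succ) →
      heckeStep a v = sa * v := fun v hv => if_pos hv
  have stepaF : ∀ v : Equiv.Perm (Fin (n+1)), ¬(v.symm a.castSucc < v.symm a.succ) →
      heckeStep a v = v := fun v hv => if_neg hv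
  have stepbT : ∀ v : Equiv.Perm (Fin (n+1)), (v.symm b.castSucc < v.symm b.succ) →
      heckeStep b v = sb * v := fun v hv => if_pos hv
  have stepbF : ∀ v : Equiv.Perm (Fin (n+1)), ¬(v.symm b.castSucc < v.symm b.succ) →
      heckeStep b v = v := fun v hv => if_neg hv
  by_cases ca : w.symm a.castSucc < w.symm a.succ <;>
    by_cases cb : w.symm b.castSucc < w.symm b.succ
  · rw [stepbT w cb, stepaT w ca, stepaT _ ((conda w).mpr ca), stepbT _ ((condb w).mpr cb),
      ← mul_assoc, ← mul_assoc, hcomm]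
  · rw [stepbF w cb, stepaT w ca, stepbF _ (fun hc => cb ((condb w).mp hc))]
  · rw [stepbT w cb, stepaF w ca, stepaF _ (fun hc => ca ((conda w).mp hc)), stepbT w cb]
  · rw [stepbF w cb, stepaF w ca, stepbF w cb]

lemma comm_step {n : ℕ} {a b : Fin n} (h : Comm a b) (w : Equiv.Perm (Fin (n + 1))) :
    heckeStep a (heckeStep b w) = heckeStep b (heckeStep a w) := by
  rcases h with h | h
  · exact comm_step_aux h w
  · exact (comm_step_aux h w).symm

/-! ### Word-level commutation -/

lemma foldr_move {n : ℕ} (a : Fin n) (u v : List (Fin n)) (h : ∀ b ∈ u, Comm a b)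
    (w : Equiv.Perm (Fin (n + 1))) :
    (u ++ a :: v).foldr heckeStep w = heckeStep a ((u ++ v).foldr heckeStep w) := by
  induction u with
  | nil => simp
  | cons b u ih =>
    simp only [cons_append, foldr_cons]
    rw [ih (fun x hx => h x (mem_cons_of_mem _ hx))]
    exact (comm_step (h b (mem_cons_self)) _).symm

lemma foldr_block {n : ℕ} (A B v : List (Fin n)) (h : ∀ a ∈ A, ∀ b ∈ B, Comm a b)
    (w : Equiv.Perm (Fin (n + 1))) :
    (B ++ A ++ v).foldr heckeStep w = (A ++ (B ++ v)).foldr heckeStep w := by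
  induction A with
  | nil => simp
  | cons a A ih =>
    have h1 : B ++ (a :: A) ++ v = B ++ a :: (A ++ v) := by simp
    rw [h1, foldr_move a B (A ++ v) (fun b hb => h a (mem_cons_self) b hb)]
    have h2 : B ++ (A ++ v) = B ++ A ++ v := by simp
    rw [h2, ih (fun x hx => h x (mem_cons_of_mem _ hx))]
    simp only [cons_append, foldr_cons]

lemma rows_lemma {n : ℕ} (L : List (List (Fin n)))
    (h : L.Pairwise (fun p q => ∀ a ∈ q.take 1, ∀ b ∈ p.drop 1, Comm a b))
    (w : Equiv.Perm (Fin (n + 1))) :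
    L.flatten.foldr heckeStep w
      = ((L.map (fun r => r.take 1)).flatten ++ (L.map (fun r => r.drop 1)).flatten).foldr
          heckeStep w := by
  induction L with
  | nil => simp
  | cons p L ih =>
    rw [pairwise_cons] at h
    have hcm : ∀ a ∈ (L.map (fun r => r.take 1)).flatten, ∀ b ∈ p.drop 1, Comm a b := by
      intro a ha b hb
      rw [mem_flatten] at ha
      obtain ⟨l, hl, hal⟩ := ha
      rw [mem_map] at hl
      obtain ⟨q, hq, rfl⟩ := hl
      exact h.1 q hq a hal b hb
    have hb := foldr_block ((L.map (fun r => r.take 1)).flatten) (p.drop 1)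
      ((L.map (fun r => r.drop 1)).flatten) hcm w
    simp only [foldr_append] at hb
    rw [flatten_cons, foldr_append, ih h.2]
    conv_lhs => rw [← take_append_drop 1 p]
    simp only [foldr_append, map_cons, flatten_cons]
    rw [hb]



/-! ### Main induction -/

lemma take_one_reverse (r : List α) : (r.take 1).reverse = r.take 1 := by
  cases r <;> simp

lemma sum_drop_one {A : List (List α)} (h : ∀ r ∈ A, r ≠ []) :
    ((A.map (fun r => r.drop 1)).map List.length).sum + A.length = (A.map List.length).sum := by
  induction A with
  | nil => rfl
  | cons r A ih =>
    have h1 : 0 < r.length := length_pos_iff.mpr (h r (mem_cons_self))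
    have h2 := ih (fun x hx => h x (mem_cons_of_mem _ hx))
    simp only [map_cons, sum_cons, length_cons, length_drop]
    omega

lemma key {n : ℕ} : ∀ (N : ℕ) (T : List (List (Fin n))),
    T.flatten.length ≤ N →
    (T.map List.length).Pairwise (fun a b => b ≤ a) →
    (∀ r ∈ T, r.Pairwise (fun a b => a < b)) →
    (∀ c ∈ T.transpose, c.Pairwise (fun a b => a < b)) →
    ∀ w : Equiv.Perm (Fin (n + 1)),
      ((T.transpose.map List.reverse).flatten).foldr heckeStep w
        = (T.reverse.flatten).foldr heckeStep w := by
  intro N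
  induction N with
  | zero =>
    intro T hlen _ _ _ w
    have h0 : T.flatten = [] := eq_nil_of_length_eq_zero (Nat.le_zero.mp hlen)
    have hnil := flatten_eq_nil_iff.mp h0
    rw [transpose_all_nil hnil]
    have h1 : T.reverse.flatten = [] :=
      flatten_eq_nil_iff.mpr (fun r hr => hnil r (mem_reverse.mp hr))
    rw [h1]
    rfl
  | succ N IH =>
    intro T hlen hshape hrows hcols w
    set p : List (Fin n) → Bool := fun r => !r.isEmpty with hp
    have hTAE : T.takeWhile p ++ T.dropWhile p = T := takeWhile_append_dropWhile
    set A := T.takeWhile p with hA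
    set E := T.dropWhile p with hE
    have hAne : ∀ r ∈ A, r ≠ [] := by
      intro r hr
      have h1 := mem_takeWhile_imp hr
      simp [hp, List.isEmpty_iff] at h1
      exact h1
    have hEnil : ∀ r ∈ E, r = [] := by
      rcases eq_or_ne E [] with h | h
      · simp [h]
      · have hhead : E.head h = [] := by
          have h2 := head_dropWhile_not p (l := T) (hE ▸ h)
          simp only [hp, Bool.not_eq_false'] at h2
          have h3 : (E.head h) = ((T.dropWhile p).head (hE ▸ h)) := by
            congr 1
          rw [h3]
          exact List.isEmpty_iff.mp h2
        intro r hr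
        rw [← cons_head_tail h] at hr
        rcases (mem_cons.mp hr) with rfl | hr'
        · exact hhead
        · have hsub : E.map List.length <+ T.map List.length :=
            Sublist.map _ (hE ▸ dropWhile_sublist (p := p) (l := T))
          have hpw := hshape.sublist hsub
          rw [← cons_head_tail h, map_cons, pairwise_cons] at hpw
          have h4 := hpw.1 r.length (mem_map_of_mem hr')
          rw [hhead] at h4
          simp only [length_nil, Nat.le_zero] at h4
          exact length_eq_zero_iff.mp h4
    rcases eq_or_ne A [] with hA0 | hA0
    · have hnilT : ∀ r ∈ T, r = [] := by
        intro r hr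
        rw [← hTAE] at hr
        rcases mem_append.mp hr with h | h
        · rw [hA0] at h; simp at h
        · exact hEnil r h
      rw [transpose_all_nil hnilT]
      have h1 : T.reverse.flatten = [] :=
        flatten_eq_nil_iff.mpr (fun r hr => hnilT r (mem_reverse.mp hr))
      rw [h1]
      rfl
    · set T₁ := A.map (fun r => r.drop 1) with hT₁
      set H := (A.map (fun r => r.take 1)).flatten with hH
      have htrT : T.transpose = A.transpose := by
        conv_lhs => rw [← hTAE]
        exact transpose_append_empty hEnil A
      have htrA : A.transpose = H :: T₁.transpose := transpose_heads_tails hA0 hAne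
      -- hypotheses for T₁
      have hAsub : A <+ T := hA ▸ takeWhile_sublist p
      have hshapeA : (A.map List.length).Pairwise (fun a b => b ≤ a) :=
        hshape.sublist (hAsub.map _)
      have hshape₁ : (T₁.map List.length).Pairwise (fun a b => b ≤ a) := by
        rw [hT₁, map_map, pairwise_map]
        rw [pairwise_map] at hshapeA
        exact hshapeA.imp (fun {x y} hxy => by
          simp only [Function.comp_apply, length_drop]; omega)
      have hrows₁ : ∀ r ∈ T₁, r.Pairwise (fun a b => a < b) := by
        intro r hr
        rw [hT₁, mem_map] at hr
        obtain ⟨q, hq, rfl⟩ := hr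
        exact (hrows q (hAsub.mem hq)).sublist (drop_sublist 1 q)
      have hcols₁ : ∀ c ∈ T₁.transpose, c.Pairwise (fun a b => a < b) := by
        intro c hc
        exact hcols c (htrT ▸ htrA ▸ mem_cons_of_mem _ hc)
      -- length bound
      have hflatE : E.flatten = [] := flatten_eq_nil_iff.mpr hEnil
      have hflatT : T.flatten = A.flatten := by
        conv_lhs => rw [← hTAE]
        rw [flatten_append, hflatE, append_nil]
      have hsum := sum_drop_one hAne
      have hApos : 0 < A.length := length_pos_iff.mpr hA0
      have hlen₁ : T₁.flatten.length ≤ N := by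
        rw [length_flatten]
        rw [hflatT, length_flatten] at hlen
        rw [hT₁]
        omega
      have ihT₁ := IH T₁ hlen₁ hshape₁ hrows₁ hcols₁
      -- the head column is a column of T
      have hHmem : H ∈ T.transpose := by rw [htrT, htrA]; exact mem_cons_self
      have hHpw : H.Pairwise (fun a b => a < b) := hcols H hHmem
      have hheads : A.Pairwise (fun x y => ∀ u ∈ x.take 1, ∀ v ∈ y.take 1, u < v) := by
        have h1 := (pairwise_flatten.mp (hH ▸ hHpw)).2
        rwa [pairwise_map] at h1
      have hPL : A.reverse.Pairwise
          (fun p q => ∀ a ∈ q.take 1, ∀ b ∈ p.drop 1, Comm a b) := by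
        rw [pairwise_reverse]
        refine hheads.imp_of_mem ?_
        intro x y hx hy hR a ha b hb
        obtain ⟨c, t, rfl⟩ : ∃ c t, y = c :: t := by
          cases y with
          | nil => exact absurd rfl (hAne _ hy)
          | cons c t => exact ⟨c, t, rfl⟩
        simp only [drop_one, tail_cons] at hb
        have hac : a < c := hR a ha c (by simp)
        have hcb : c < b := by
          have := hrows _ (hAsub.mem hy)
          rw [pairwise_cons] at this
          exact this.1 b hb
        left
        have h1 : (a : ℕ) < (c : ℕ) := hac
        have h2 : (c : ℕ) < (b : ℕ) := hcb
        omega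
      -- reading-word identifications
      have hrevT : T.reverse.flatten = A.reverse.flatten := by
        conv_lhs => rw [← hTAE]
        rw [reverse_append, flatten_append, flatten_eq_nil_iff.mpr
          (fun r hr => hEnil r (mem_reverse.mp hr)), nil_append]
      have hid1 : (A.reverse.map (fun r => r.take 1)).flatten = H.reverse := by
        rw [hH, reverse_flatten]
        congr 1
        rw [map_reverse, map_map]
        congr 1
        exact (map_congr_left (fun r _ => take_one_reverse r)).symm ▸ rfl
      have hid2 : (A.reverse.map (fun r => r.drop 1)).flatten = T₁.reverse.flatten := by
        rw [hT₁, map_reverse]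
      have hrl := rows_lemma A.reverse hPL w
      rw [hid1, hid2] at hrl
      -- assemble
      rw [hrevT, hrl, htrT, htrA, map_cons, flatten_cons, foldr_append, foldr_append, ihT₁]

end Stmt11


/-- for a filling `T` of the Young diagram of a partition (rows listed
top to bottom, of weakly decreasing lengths) with entries in `{1,…,n}` that strictly
increases along each row and down each column, the column reading word (columns read
bottom to top, columns taken left to right) and the row reading word (rows read left
to right, rows taken bottom to top) are Hecke words for the same permutation of
`{1,…,n+1}`. -/
theorem stmt_11 {n : ℕ} (T : List (List (Fin n)))
    (hshape : (T.map List.length).Pairwise (fun a b => b ≤ a))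
    (hrows : ∀ r ∈ T, r.Pairwise (fun a b => a < b))
    (hcols : ∀ c ∈ T.transpose, c.Pairwise (fun a b => a < b)) :
    ((T.transpose.map List.reverse).flatten).foldr heckeStep (1 : Equiv.Perm (Fin (n + 1)))
      = (T.reverse.flatten).foldr heckeStep 1 :=
  Stmt11.key T.flatten.length T le_rfl hshape hrows hcols 1
end
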